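/- Let F₄ := {0, 1/4, 1/3, 1/2, 2/3, 3/4, 1} and let ω ∈ [0,1] with ε := dist(ω, F₄) > 0. Then for all (T̂, Q̂) ∈ ℝ² and all (a, b) ∈ ℝ² there exists t ∈ [0, 2π/ε] such that dist(T̂ + t − a, 2πℤ) ≤ π/4 and dist(Q̂ + ωt − b, 2πℤ) ≤ π/4. -/
import Mathlib
set_option maxHeartbeats 1000000


open Real

/-- Distance from x to the nearest integer multiple of 2π. -/
noncomputable def dist2pi (x : ℝ) : ℝ :=
  Metric.infDist x {y : ℝ | ∃ m : ℤ, y = 2 * π * m}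

private lemma aux_pos (β c : ℝ) (hβ0 : 0 < β) (hβ4 : β ≤ 1/4) :
    ∃ j : ℕ, (j:ℝ) * β ≤ 3/4 + β ∧ ∃ m : ℤ, |(j:ℝ)*β + c - m| ≤ 1/8 := by
  have hd0 : 0 ≤ Int.fract (-c) := Int.fract_nonneg _
  have hd1 : Int.fract (-c) < 1 := Int.fract_lt_one _
  have hdc : Int.fract (-c) = -c - ⌊-c⌋ := rfl
  set d := Int.fract (-c) with hd
  by_cases h1 : d ≤ 1/8
  · refine ⟨0, by nlinarith, -⌊-c⌋, ?_⟩
    push_cast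
    rw [abs_le]; constructor <;> linarith
  by_cases h2 : 7/8 ≤ d
  · refine ⟨0, by nlinarith, -⌊-c⌋ - 1, ?_⟩
    push_cast
    rw [abs_le]; constructor <;> linarith
  · set n : ℤ := ⌈(d - 1/8)/β⌉ with hn
    have hnpos : 0 < n := Int.ceil_pos.mpr (div_pos (by linarith) hβ0)
    have hle : (d - 1/8)/β ≤ (n:ℝ) := Int.le_ceil _
    have hlt : (n:ℝ) < (d - 1/8)/β + 1 := Int.ceil_lt_add_one _
    have hnb1 : d - 1/8 ≤ (n:ℝ)*β := by
      rw [div_le_iff₀ hβ0] at hle; linarith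
    have hnb2 : (n:ℝ)*β ≤ d - 1/8 + β := by
      have h' : (n:ℝ) - 1 < (d - 1/8)/β := by linarith
      have := (lt_div_iff₀ hβ0).mp h'
      nlinarith
    have hjcast : ((n.toNat : ℕ):ℝ) = (n:ℝ) := by
      exact_mod_cast Int.toNat_of_nonneg hnpos.le
    refine ⟨n.toNat, by rw [hjcast]; linarith, -⌊-c⌋, ?_⟩
    rw [hjcast]
    push_cast
    rw [abs_le]; constructor <;> linarith

private lemma aux_step (β c : ℝ) (hβ0 : 0 < |β|) (hβ4 : |β| ≤ 1/4) :
    ∃ j : ℕ, (j:ℝ) * |β| ≤ 3/4 + |β| ∧ ∃ m : ℤ, |(j:ℝ)*β + c - m| ≤ 1/8 := by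
  rcases (abs_pos.mp hβ0).lt_or_gt with hneg | hpos
  · have h1 : |β| = -β := abs_of_neg hneg
    obtain ⟨j, hj, m, hm⟩ := aux_pos (-β) (-c) (by linarith) (by rw [h1] at hβ4; linarith)
    refine ⟨j, by rw [h1]; linarith, -m, ?_⟩
    rw [show (j:ℝ)*β + c - ((-m : ℤ):ℝ) = -((j:ℝ)*(-β) + (-c) - m) by push_cast; ring, abs_neg]
    exact hm
  · have h1 : |β| = β := abs_of_pos hpos
    obtain ⟨j, hj, m, hm⟩ := aux_pos β c hpos (by rwa [h1] at hβ4)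
    exact ⟨j, by rw [h1]; linarith, m, hm⟩

private lemma case_finish (α ε c : ℝ) (q : ℕ) (p : ℤ) (hε : 0 < ε)
    (hεq : ε * (4*((q:ℝ)+1)) ≤ 1)
    (hβl : (q:ℝ)*ε ≤ |(q:ℝ)*α - p|) (hβu : |(q:ℝ)*α - p| ≤ 1/4) (hq : 0 < q) :
    ∃ k : ℕ, (k:ℝ) ≤ 1/ε - 1 ∧ ∃ m : ℤ, |(k:ℝ)*α + c - m| ≤ 1/8 := by
  set β := (q:ℝ)*α - p with hβ
  have hqR : 0 < (q:ℝ) := by exact_mod_cast hq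
  have hβ0 : 0 < |β| := lt_of_lt_of_le (by positivity) hβl
  obtain ⟨j, hj, m, hm⟩ := aux_step β c hβ0 hβu
  refine ⟨q*j, ?_, m + (j:ℤ)*p, ?_⟩
  · rw [le_sub_iff_add_le, le_div_iff₀ hε]
    push_cast
    rcases Nat.eq_zero_or_pos j with rfl | hj1
    · push_cast
      nlinarith [mul_pos hε hqR]
    · have hj1' : (1:ℝ) ≤ j := by exact_mod_cast hj1
      have key : 0 ≤ ((j:ℝ)-1)*(|β| - (q:ℝ)*ε) := mul_nonneg (by linarith) (by linarith)
      nlinarith [hj, hβu, key, hεq]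
  · have hrw : ((q*j : ℕ):ℝ)*α + c - ((m + (j:ℤ)*p : ℤ):ℝ) = (j:ℝ)*β + c - m := by
      rw [hβ]; push_cast; ring
    rw [hrw]; exact hm

private lemma core (α ε : ℝ) (hα0 : 0 ≤ α) (hα1 : α ≤ 1) (hε : 0 < ε)
    (e0 : ε ≤ |α - 0|) (e14 : ε ≤ |α - 1/4|) (e13 : ε ≤ |α - 1/3|)
    (e12 : ε ≤ |α - 1/2|) (e23 : ε ≤ |α - 2/3|) (e34 : ε ≤ |α - 3/4|)
    (e1 : ε ≤ |α - 1|) (c : ℝ) :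
    ∃ k : ℕ, (k:ℝ) ≤ 1/ε - 1 ∧ ∃ m : ℤ, |(k:ℝ)*α + c - m| ≤ 1/8 := by
  rw [sub_zero, abs_of_nonneg hα0] at e0
  rw [abs_of_nonpos (by linarith)] at e1
  rcases le_or_gt α (1/4) with hc | hc
  · -- q = 1, p = 0
    have e14' : ε ≤ 1/4 - α := by rw [abs_of_nonpos (by linarith)] at e14; linarith
    refine case_finish α ε c 1 0 hε (by push_cast; linarith) ?_ ?_ one_pos
    · simp only [Nat.cast_one, Int.cast_zero, one_mul, sub_zero]
      rw [abs_of_nonneg hα0]; linarith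
    · simp only [Nat.cast_one, Int.cast_zero, one_mul, sub_zero]
      rw [abs_of_nonneg hα0]; linarith
  rcases le_or_gt (3/4) α with hc2 | hc2
  · -- q = 1, p = 1
    have e34' : ε ≤ α - 3/4 := by rw [abs_of_nonneg (by linarith)] at e34; linarith
    refine case_finish α ε c 1 1 hε (by push_cast; linarith) ?_ ?_ one_pos
    · simp only [Nat.cast_one, Int.cast_one, one_mul]
      rw [abs_of_nonpos (by linarith)]; linarith
    · simp only [Nat.cast_one, Int.cast_one, one_mul]
      rw [abs_of_nonpos (by linarith)]; linarith
  rcases lt_or_ge α (3/8) with hc3 | hc3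
  · -- 1/4 < α < 3/8 : q = 3, p = 1
    have habs : |(3:ℝ)*α - 1| = 3*|α - 1/3| := by
      rw [show (3:ℝ)*α - 1 = 3*(α - 1/3) by ring, abs_mul,
        abs_of_pos (by norm_num : (0:ℝ) < 3)]
    refine case_finish α ε c 3 1 hε ?_ ?_ ?_ (by norm_num)
    · push_cast
      rcases le_or_gt α (1/3) with h | h
      · have e14' : ε ≤ α - 1/4 := by rw [abs_of_nonneg (by linarith)] at e14; linarith
        have e13' : ε ≤ 1/3 - α := by rw [abs_of_nonpos (by linarith)] at e13; linarith
        linarith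
      · have e13' : ε ≤ α - 1/3 := by rw [abs_of_nonneg (by linarith)] at e13; linarith
        linarith
    · push_cast
      rw [habs]; linarith [e13]
    · push_cast
      rw [abs_le]; constructor <;> linarith
  rcases le_or_gt α (5/8) with hc4 | hc4
  · -- 3/8 ≤ α ≤ 5/8 : q = 2, p = 1
    have habs : |(2:ℝ)*α - 1| = 2*|α - 1/2| := by
      rw [show (2:ℝ)*α - 1 = 2*(α - 1/2) by ring, abs_mul,
        abs_of_pos (by norm_num : (0:ℝ) < 2)]
    refine case_finish α ε c 2 1 hε ?_ ?_ ?_ (by norm_num)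
    · push_cast
      rcases le_or_gt α (1/2) with h | h
      · have e13' : ε ≤ α - 1/3 := by rw [abs_of_nonneg (by linarith)] at e13; linarith
        have e12' : ε ≤ 1/2 - α := by rw [abs_of_nonpos (by linarith)] at e12; linarith
        linarith
      · have e12' : ε ≤ α - 1/2 := by rw [abs_of_nonneg (by linarith)] at e12; linarith
        have e23' : ε ≤ 2/3 - α := by rw [abs_of_nonpos (by linarith)] at e23; linarith
        linarith
    · push_cast
      rw [habs]; linarith [e12]
    · push_cast
      rw [abs_le]; constructor <;> linarith
  · -- 5/8 < α < 3/4 : q = 3, p = 2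
    have habs : |(3:ℝ)*α - 2| = 3*|α - 2/3| := by
      rw [show (3:ℝ)*α - 2 = 3*(α - 2/3) by ring, abs_mul,
        abs_of_pos (by norm_num : (0:ℝ) < 3)]
    refine case_finish α ε c 3 2 hε ?_ ?_ ?_ (by norm_num)
    · push_cast
      rcases le_or_gt α (2/3) with h | h
      · have e23' : ε ≤ 2/3 - α := by rw [abs_of_nonpos (by linarith)] at e23; linarith
        linarith
      · have e23' : ε ≤ α - 2/3 := by rw [abs_of_nonneg (by linarith)] at e23; linarith
        have e34' : ε ≤ 3/4 - α := by rw [abs_of_nonpos (by linarith)] at e34; linarith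
        linarith
    · push_cast
      rw [habs]; linarith [e23]
    · push_cast
      rw [abs_le]; constructor <;> linarith

/-- Ergodization (eq:terg): if ω ∈ [0,1] has positive distance ε from the Farey set F₄, then
the linear flow t ↦ (T̂+t, Q̂+ωt) reaches any π/4-neighbourhood on the torus (ℝ/2πℤ)² within
time 2π/ε. -/
theorem ergodization_time (ω : ℝ) (hω : ω ∈ Set.Icc (0:ℝ) 1)
    (ε : ℝ)
    (hε : ε = Metric.infDist ω ({0, 1/4, 1/3, 1/2, 2/3, 3/4, 1} : Set ℝ))
    (hεpos : 0 < ε) :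
    ∀ That Qhat a b : ℝ, ∃ t ∈ Set.Icc (0:ℝ) (2 * π / ε),
      dist2pi (That + t - a) ≤ π / 4 ∧ dist2pi (Qhat + ω * t - b) ≤ π / 4 := by
  intro That Qhat a b
  have hπ := Real.pi_pos
  have hS : ∀ x ∈ ({0, 1/4, 1/3, 1/2, 2/3, 3/4, 1} : Set ℝ), ε ≤ |ω - x| := by
    intro x hx
    rw [hε, ← Real.dist_eq]
    exact Metric.infDist_le_dist_of_mem hx
  set s : ℝ := 2*π*Int.fract ((a - That)/(2*π)) with hs
  have hs0 : 0 ≤ s := mul_nonneg (by positivity) (Int.fract_nonneg _)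
  have hs1 : s ≤ 2*π := by
    have := Int.fract_lt_one ((a - That)/(2*π))
    nlinarith [Int.fract_nonneg ((a - That)/(2*π))]
  have hkey : That + s - a = 2*π*(-(⌊(a - That)/(2*π)⌋:ℝ)) := by
    rw [hs, Int.fract]
    have h2π : (2*π) ≠ 0 := by positivity
    field_simp
    ring
  obtain ⟨k, hk, m, hm⟩ := core ω ε hω.1 hω.2 hεpos
    (hS 0 (by norm_num)) (hS (1/4) (by norm_num)) (hS (1/3) (by norm_num))
    (hS (1/2) (by norm_num)) (hS (2/3) (by norm_num)) (hS (3/4) (by norm_num))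
    (hS 1 (by norm_num)) ((Qhat + ω*s - b)/(2*π))
  refine ⟨s + 2*π*k, ⟨by positivity, ?_⟩, ?_, ?_⟩
  · have h1 : 2*π*(k:ℝ) ≤ 2*π*(1/ε - 1) :=
      mul_le_mul_of_nonneg_left hk (by positivity)
    have h2 : 2*π*(1/ε - 1) = 2*π/ε - 2*π := by ring
    linarith
  · have hmem : That + (s + 2*π*k) - a ∈ {y : ℝ | ∃ m : ℤ, y = 2 * π * m} := by
      refine ⟨-⌊(a - That)/(2*π)⌋ + (k:ℤ), ?_⟩
      push_cast
      linarith [hkey]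
    unfold dist2pi
    rw [Metric.infDist_zero_of_mem hmem]
    positivity
  · unfold dist2pi
    have hmem : 2*π*(m:ℝ) ∈ {y : ℝ | ∃ m : ℤ, y = 2 * π * m} := ⟨m, rfl⟩
    refine le_trans (Metric.infDist_le_dist_of_mem hmem) ?_
    rw [Real.dist_eq]
    have hrw : Qhat + ω*(s + 2*π*(k:ℝ)) - b - 2*π*(m:ℝ)
        = 2*π*((k:ℝ)*ω + (Qhat + ω*s - b)/(2*π) - (m:ℝ)) := by
      have h2π : (2*π) ≠ 0 := by positivity
      field_simp
      ring
    rw [hrw, abs_mul, abs_of_pos (by positivity : (0:ℝ) < 2*π)]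
    nlinarith [hm, abs_nonneg ((k:ℝ)*ω + (Qhat + ω*s - b)/(2*π) - (m:ℝ))]
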